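/- Let f : ℝ^d → ℝ be three times differentiable with third derivative tensor H'(x). If f is L₁-Hessian Lipschitz, i.e. ‖H'(x)‖_{{1}{2}{3}} ≤ L₁ for all x, then f is √d·L₁-strongly Hessian Lipschitz, i.e. ‖H'(x)‖_{{1,2}{3}} ≤ √d·L₁ for all x. -/

import Mathlib

open scoped BigOperators

/-- The `{1}{2}{3}` tensor norm of a 3-tensor. -/
noncomputable def norm123 {d : ℕ} (A : Fin d → Fin d → Fin d → ℝ) : ℝ :=
  sSup {s | ∃ x y z : Fin d → ℝ,
    (∑ i, x i ^ 2) ≤ 1 ∧ (∑ j, y j ^ 2) ≤ 1 ∧ (∑ k, z k ^ 2) ≤ 1 ∧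
    s = ∑ i, ∑ j, ∑ k, A i j k * x i * y j * z k}

/-- The `{1,2}{3}` tensor norm of a 3-tensor. -/
noncomputable def norm12_3 {d : ℕ} (A : Fin d → Fin d → Fin d → ℝ) : ℝ :=
  sSup {s | ∃ (x : Fin d → Fin d → ℝ) (y : Fin d → ℝ),
    (∑ i, ∑ j, x i j ^ 2) ≤ 1 ∧ (∑ k, y k ^ 2) ≤ 1 ∧
    s = ∑ i, ∑ j, ∑ k, A i j k * x i j * y k}

/-- The spectral (operator) norm of a matrix: sup of `‖M y‖` over `‖y‖ ≤ 1`. -/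
noncomputable def opNorm {d : ℕ} (M : Matrix (Fin d) (Fin d) ℝ) : ℝ :=
  sSup {s | ∃ y : Fin d → ℝ, (∑ k, y k ^ 2) ≤ 1 ∧
    s = Real.sqrt (∑ i, (∑ k, M i k * y k) ^ 2)}

/-- The third-derivative 3-tensor of `f` at `x`, with entries
`H'(x)_{ijk} = D³f(x)[e_i, e_j, e_k]`. -/
noncomputable def thirdDeriv {d : ℕ} (f : EuclideanSpace ℝ (Fin d) → ℝ)
    (x : EuclideanSpace ℝ (Fin d)) (i j k : Fin d) : ℝ :=
  iteratedFDeriv ℝ 3 f x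
    ![EuclideanSpace.single i 1, EuclideanSpace.single j 1, EuclideanSpace.single k 1]

/-! For a unit vector `y`, the `i`-th slice `j ↦ ∑ k, A i j k * y k` of `A(·, ·, y)` pairs with
a unit `w` to `A(e_i, w, y) ≤ ‖A‖_{1}{2}{3}`, so each of the `d` slices has Euclidean norm at most
`‖A‖_{1}{2}{3}`. Hence `A(·, ·, y)` has Frobenius norm at most `√d · ‖A‖_{1}{2}{3}`, and
Cauchy–Schwarz against a Frobenius-unit `x` gives the bound on `‖A‖_{1,2}{3}`. -/

theorem abs_le_one_of_sum_sq_le_one {ι : Type*} [Fintype ι] {x : ι → ℝ}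
    (hx : ∑ i, x i ^ 2 ≤ 1) (i : ι) : |x i| ≤ 1 :=
  (sq_le_one_iff_abs_le_one _).mp <|
    (Finset.single_le_sum (fun j _ => sq_nonneg (x j)) (Finset.mem_univ i)).trans hx

theorem sqrt_sum_sq_le_of_forall_sum_mul_le {ι : Type*} [Fintype ι] (v : ι → ℝ) {L : ℝ}
    (h : ∀ w : ι → ℝ, ∑ i, w i ^ 2 ≤ 1 → ∑ i, v i * w i ≤ L) :
    √(∑ i, v i ^ 2) ≤ L := by
  set r := √(∑ i, v i ^ 2)
  have hr : r ^ 2 = ∑ i, v i ^ 2 := Real.sq_sqrt (Finset.sum_nonneg fun i _ => sq_nonneg _)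
  rcases (show 0 ≤ r from Real.sqrt_nonneg _).eq_or_lt with hr0 | hr0
  · rw [← hr0]
    simpa using h 0 (by simp)
  have hunit : ∑ i, (v i / r) ^ 2 = 1 := by
    simp_rw [div_pow, ← Finset.sum_div, ← hr]
    exact div_self (by positivity)
  calc r = ∑ i, v i * (v i / r) := by
        simp_rw [← mul_div_assoc, ← Finset.sum_div, ← sq, ← hr]
        field_simp
    _ ≤ L := h _ hunit.le

section Tensor

variable {d : ℕ} (A : Fin d → Fin d → Fin d → ℝ)

theorem le_norm123 {x y z : Fin d → ℝ} (hx : ∑ i, x i ^ 2 ≤ 1) (hy : ∑ j, y j ^ 2 ≤ 1)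
    (hz : ∑ k, z k ^ 2 ≤ 1) :
    ∑ i, ∑ j, ∑ k, A i j k * x i * y j * z k ≤ norm123 A := by
  refine le_csSup ⟨∑ i, ∑ j, ∑ k, |A i j k|, ?_⟩ ⟨x, y, z, hx, hy, hz, rfl⟩
  rintro s ⟨x, y, z, hx, hy, hz, rfl⟩
  gcongr with i _ j _ k _
  calc A i j k * x i * y j * z k ≤ |A i j k| * |x i| * |y j| * |z k| := by
        simpa only [abs_mul] using le_abs_self (A i j k * x i * y j * z k)
    _ ≤ |A i j k| * 1 * 1 * 1 := by
        gcongr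
        exacts [abs_le_one_of_sum_sq_le_one hx i, abs_le_one_of_sum_sq_le_one hy j,
          abs_le_one_of_sum_sq_le_one hz k]
    _ = |A i j k| := by ring

theorem norm123_nonneg : 0 ≤ norm123 A := by
  simpa using le_norm123 A (x := (0 : Fin d → ℝ)) (y := 0) (z := 0) (by simp) (by simp) (by simp)

theorem sqrt_sum_sq_contract_le_norm123 (i : Fin d) {y : Fin d → ℝ} (hy : ∑ k, y k ^ 2 ≤ 1) :
    √(∑ j, (∑ k, A i j k * y k) ^ 2) ≤ norm123 A := by
  refine sqrt_sum_sq_le_of_forall_sum_mul_le _ fun w hw => ?_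
  have he : ∑ i', (Pi.single i 1 : Fin d → ℝ) i' ^ 2 ≤ 1 := by simp [Pi.single_apply]
  convert le_norm123 A he hw hy using 1
  simp [Pi.single_apply, Finset.mul_sum, mul_comm, mul_left_comm]

theorem norm12_3_le_sqrt_mul_norm123 : norm12_3 A ≤ √d * norm123 A := by
  refine csSup_le ⟨0, 0, 0, by simp, by simp, by simp⟩ ?_
  rintro s ⟨x, y, hx, hy, rfl⟩
  set B : Fin d × Fin d → ℝ := fun p => ∑ k, A p.1 p.2 k * y k
  have hB : ∑ p, B p ^ 2 ≤ d * norm123 A ^ 2 := by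
    rw [Fintype.sum_prod_type]
    calc ∑ i, ∑ j, B (i, j) ^ 2 ≤ ∑ _i : Fin d, norm123 A ^ 2 := by
          gcongr with i
          exact (Real.sqrt_le_left (norm123_nonneg A)).mp
            (sqrt_sum_sq_contract_le_norm123 A i hy)
      _ = d * norm123 A ^ 2 := by simp
  have hx' : ∑ p : Fin d × Fin d, x p.1 p.2 ^ 2 ≤ 1 := by rwa [Fintype.sum_prod_type]
  calc ∑ i, ∑ j, ∑ k, A i j k * x i j * y k = ∑ p : Fin d × Fin d, x p.1 p.2 * B p := by
        simp [B, Fintype.sum_prod_type, Finset.mul_sum, mul_assoc, mul_left_comm]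
    _ ≤ √(∑ p : Fin d × Fin d, x p.1 p.2 ^ 2) * √(∑ p, B p ^ 2) :=
        Real.sum_mul_le_sqrt_mul_sqrt _ _ _
    _ ≤ 1 * √(d * norm123 A ^ 2) := by
        gcongr
        exact Real.sqrt_le_one.mpr hx'
    _ = √d * norm123 A := by
        rw [one_mul, Real.sqrt_mul (Nat.cast_nonneg d), Real.sqrt_sq (norm123_nonneg A)]

end Tensor

theorem strongly_hessian_lipschitz_of_hessian_lipschitz_general {d : ℕ}
    (f : EuclideanSpace ℝ (Fin d) → ℝ) (L₁ : ℝ)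
    (hL : ∀ x, norm123 (thirdDeriv f x) ≤ L₁) :
    ∀ x, norm12_3 (thirdDeriv f x) ≤ Real.sqrt d * L₁ := fun x =>
  (norm12_3_le_sqrt_mul_norm123 _).trans (mul_le_mul_of_nonneg_left (hL x) (Real.sqrt_nonneg _))

/-- Every `L₁`-Hessian Lipschitz function is `√d·L₁`-strongly Hessian Lipschitz. -/
theorem strongly_hessian_lipschitz_of_hessian_lipschitz {d : ℕ}
    (f : EuclideanSpace ℝ (Fin d) → ℝ) (hf : ContDiff ℝ 3 f) (L₁ : ℝ)
    (hL : ∀ x, norm123 (thirdDeriv f x) ≤ L₁) :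
    ∀ x, norm12_3 (thirdDeriv f x) ≤ Real.sqrt d * L₁ :=
  strongly_hessian_lipschitz_of_hessian_lipschitz_general f L₁ hL
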